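/- Suppose P_L e_i = 1 and θ e_i ≤ 2 for every entry e_i of e, and suppose there is a set U of indices (the uncertain events) with κ_u e_i ≤ 1 for every i ∈ U. Let m₂ be the cardinality of U, m₁ = m − m₂, and c the sum of P_M f_j over all entries f_j of f. Then there exist an index set I (namely the complement of U) and an alignment γ of the corresponding realization with f such that 𝔎(I, γ) ≤ 3·m₁ + m₂ + c; in particular δ' m n ≤ 3·m₁ + m₂ + c. -/

import Mathlib

open scoped ENNReal

namespace Stmt3

variable {E F : Type*}

/-- The log projection of a list of moves: first components that are not `none`. -/
def logProj (γ : List (Option E × Option F)) : List E := γ.filterMap Prod.fst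

/-- The model projection of a list of moves: second components that are not `none`. -/
def modelProj (γ : List (Option E × Option F)) : List F := γ.filterMap Prod.snd

/-- `γ` is an alignment of `e` and `f`: a list of moves (no `(none, none)` pairs)
whose log projection is `e` and whose model projection is `f`. -/
def IsAlignment (e : List E) (f : List F) (γ : List (Option E × Option F)) : Prop :=
  (∀ mv ∈ γ, mv ≠ (none, none)) ∧ logProj γ = e ∧ modelProj γ = f

/-- Combined cost of a log move: `θ a` if `P_L a = 0`, else `P_L a * (1 + θ a)`. -/
noncomputable def lg (PL θ : E → ℝ≥0∞) (a : E) : ℝ≥0∞ :=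
  if PL a = 0 then θ a else PL a * (1 + θ a)

/-- Combined cost of a synchronous move: `θ a` if `P₌ a b = 0`, else `P₌ a b * (1 + θ a)`. -/
noncomputable def sync (Peq : E → F → ℝ≥0∞) (θ : E → ℝ≥0∞) (a : E) (b : F) : ℝ≥0∞ :=
  if Peq a b = 0 then θ a else Peq a b * (1 + θ a)

/-- Combined cost of a single move. -/
noncomputable def cMoveCost (PL : E → ℝ≥0∞) (PM : F → ℝ≥0∞) (Peq : E → F → ℝ≥0∞)
    (θ : E → ℝ≥0∞) : Option E × Option F → ℝ≥0∞
  | (some a, none) => lg PL θ a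
  | (none, some b) => PM b
  | (some a, some b) => sync Peq θ a b
  | (none, none) => 0

/-- The realization of `e` determined by the index set `I`: the order-preserving
selection of the entries of `e` at the indices in `I`. -/
def select (e : List E) (I : Finset (Fin e.length)) : List E :=
  ((List.finRange e.length).filter (fun i => i ∈ I)).map e.get

/-- Total cost `𝔎(I, γ)`: sum of the combined move costs of the moves of `γ` plus the
removal cost of the realization, i.e. the sum of `κ_u e_i` over non-selected indices. -/
noncomputable def totalCost (PL : E → ℝ≥0∞) (PM : F → ℝ≥0∞) (Peq : E → F → ℝ≥0∞)
    (θ κu : E → ℝ≥0∞) (e : List E) (I : Finset (Fin e.length))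
    (γ : List (Option E × Option F)) : ℝ≥0∞ :=
  (γ.map (cMoveCost PL PM Peq θ)).sum + ∑ i ∈ Iᶜ, κu (e.get i)

/-!
Drop exactly the uncertain events and align the resulting realization with `f` by log moves
only, followed by model moves only. Each log move costs `P_L (1 + θ) ≤ 3`, each dropped event at
most `1`, and the model moves cost `c`. The table `δ'` is bounded by the cost of any such
realization and alignment: the first row of `δ'` sums the `P_M f_j`, and each step down the last
column costs at most `min (lg e_i) (κ_u e_i)`.
-/

theorem le_sum_add_of_succ_le {M : Type*} [AddCommMonoid M] [Preorder M] [AddLeftMono M]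
    (a : ℕ → M) (n : ℕ) (d : Fin n → M) (h : ∀ k : Fin n, a (k + 1) ≤ d k + a k) :
    a n ≤ ∑ k, d k + a 0 := by
  induction n with
  | zero => simp
  | succ n ih =>
    calc a (n + 1) ≤ d (Fin.last n) + a n := h (Fin.last n)
      _ ≤ d (Fin.last n) + (∑ k : Fin n, d k.castSucc + a 0) :=
          add_le_add le_rfl (ih _ fun k => h k.castSucc)
      _ = ∑ k, d k + a 0 := by rw [Fin.sum_univ_castSucc]; abel

theorem sum_map_select {M : Type*} [AddCommMonoid M] (g : E → M) (e : List E)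
    (I : Finset (Fin e.length)) : ((select e I).map g).sum = ∑ i ∈ I, g (e.get i) := by
  have hI : ((List.finRange e.length).filter (· ∈ I)).toFinset = I := by
    ext i; simp
  rw [select, List.map_map, ← List.sum_toFinset _ ((List.nodup_finRange _).filter _), hI]
  rfl

def logThenModelMoves (e : List E) (f : List F) : List (Option E × Option F) :=
  e.map (fun a => (some a, none)) ++ f.map (fun b => (none, some b))

theorem isAlignment_logThenModelMoves (e : List E) (f : List F) :
    IsAlignment e f (logThenModelMoves e f) := by
  refine ⟨?_, ?_, ?_⟩
  · simp only [logThenModelMoves, List.mem_append, List.mem_map]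
    rintro _ (⟨a, -, rfl⟩ | ⟨b, -, rfl⟩) <;> simp
  · simp [logProj, logThenModelMoves, List.filterMap_map]
  · simp [modelProj, logThenModelMoves, List.filterMap_map]

section Costs

variable (PL : E → ℝ≥0∞) (PM : F → ℝ≥0∞) (Peq : E → F → ℝ≥0∞) (θ κu : E → ℝ≥0∞)
  (e : List E) (f : List F) (δ' : ℕ → ℕ → ℝ≥0∞)

theorem lg_of_eq_one {a : E} (h : PL a = 1) : lg PL θ a = 1 + θ a := by
  simp [lg, h]

theorem totalCost_logThenModelMoves (I : Finset (Fin e.length)) :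
    totalCost PL PM Peq θ κu e I (logThenModelMoves (select e I) f) =
      ∑ i ∈ I, lg PL θ (e.get i) + (f.map PM).sum + ∑ i ∈ Iᶜ, κu (e.get i) := by
  simp only [totalCost, logThenModelMoves, List.map_append, List.sum_append, List.map_map]
  rw [← sum_map_select (lg PL θ)]
  rfl


theorem dp_succ_le_min_add
    (hi0 : ∀ i (hi : i < e.length),
      δ' (i + 1) 0 = min (lg PL θ (e[i]'hi)) (κu (e[i]'hi)) + δ' i 0)
    (hij : ∀ i j (hi : i < e.length) (hj : j < f.length),
      δ' (i + 1) (j + 1) =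
        min (sync Peq θ (e[i]'hi) (f[j]'hj) + δ' i j)
          (min (lg PL θ (e[i]'hi) + δ' i (j + 1))
            (min (κu (e[i]'hi) + δ' i (j + 1)) (PM (f[j]'hj) + δ' (i + 1) j))))
    {j : ℕ} (hj : j ≤ f.length) (i : ℕ) (hi : i < e.length) :
    δ' (i + 1) j ≤ min (lg PL θ (e[i]'hi)) (κu (e[i]'hi)) + δ' i j := by
  cases j with
  | zero => exact (hi0 i hi).le
  | succ j =>
    rw [hij i j hi hj, ← min_add_add_right]
    exact le_min ((min_le_right _ _).trans (min_le_left _ _))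
      ((min_le_right _ _).trans ((min_le_right _ _).trans (min_le_left _ _)))

theorem dp_le_totalCost_logThenModelMoves
    (h00 : δ' 0 0 = 0)
    (h0j : ∀ j (hj : j < f.length), δ' 0 (j + 1) = PM (f[j]'hj) + δ' 0 j)
    (hstep : ∀ i (hi : i < e.length),
      δ' (i + 1) f.length ≤ min (lg PL θ (e[i]'hi)) (κu (e[i]'hi)) + δ' i f.length)
    (I : Finset (Fin e.length)) :
    δ' e.length f.length ≤ totalCost PL PM Peq θ κu e I (logThenModelMoves (select e I) f) := by
  have hrow : δ' 0 f.length ≤ (f.map PM).sum := by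
    simpa [h00] using le_sum_add_of_succ_le (δ' 0) f.length (fun j => PM f[j])
      fun j => (h0j j j.2).le
  have hcol := le_sum_add_of_succ_le (δ' · f.length) e.length
    (fun i => min (lg PL θ e[i]) (κu e[i]))
    fun i => hstep i i.2
  have hmin : ∑ i : Fin e.length, min (lg PL θ e[i]) (κu e[i]) ≤
      ∑ i ∈ I, lg PL θ (e.get i) + ∑ i ∈ Iᶜ, κu (e.get i) := by
    rw [← Finset.sum_add_sum_compl I]
    exact add_le_add (Finset.sum_le_sum fun i _ => min_le_left _ _)
      (Finset.sum_le_sum fun i _ => min_le_right _ _)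
  calc δ' e.length f.length
      ≤ ∑ i : Fin e.length, min (lg PL θ e[i]) (κu e[i]) + (f.map PM).sum :=
        hcol.trans (add_le_add le_rfl hrow)
    _ ≤ ∑ i ∈ I, lg PL θ (e.get i) + ∑ i ∈ Iᶜ, κu (e.get i) + (f.map PM).sum :=
        add_le_add hmin le_rfl
    _ = _ := by rw [totalCost_logThenModelMoves, add_right_comm]

end Costs

/-- If `P_L e_i = 1` and `θ e_i ≤ 2` for every entry of `e`, and `U` is a set of indices
(the uncertain events) with `κ_u e_i ≤ 1` for `i ∈ U`, then with `m₂ = |U|`,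
`m₁ = m − m₂` and `c` the sum of `P_M` over `f`, there exist an index set `I`
(namely `Uᶜ`) and an alignment `γ` of the corresponding realization with `f` such that
`𝔎(I, γ) ≤ 3·m₁ + m₂ + c`; in particular `δ' m n ≤ 3·m₁ + m₂ + c`. -/
theorem cost_upper_bound
    (PL : E → ℝ≥0∞) (PM : F → ℝ≥0∞) (Peq : E → F → ℝ≥0∞) (θ κu : E → ℝ≥0∞)
    (e : List E) (f : List F)
    (hPL : ∀ i : Fin e.length, PL (e.get i) = 1)
    (hθ : ∀ i : Fin e.length, θ (e.get i) ≤ 2)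
    (U : Finset (Fin e.length))
    (hU : ∀ i ∈ U, κu (e.get i) ≤ 1)
    (m₁ m₂ : ℕ) (hm₂ : m₂ = U.card) (hm₁ : m₁ = e.length - m₂)
    (c : ℝ≥0∞) (hc : c = (f.map PM).sum)
    (δ' : ℕ → ℕ → ℝ≥0∞)
    (h00 : δ' 0 0 = 0)
    (hi0 : ∀ i (hi : i < e.length),
      δ' (i + 1) 0 = min (lg PL θ (e[i]'hi)) (κu (e[i]'hi)) + δ' i 0)
    (h0j : ∀ j (hj : j < f.length), δ' 0 (j + 1) = PM (f[j]'hj) + δ' 0 j)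
    (hij : ∀ i j (hi : i < e.length) (hj : j < f.length),
      δ' (i + 1) (j + 1) =
        min (sync Peq θ (e[i]'hi) (f[j]'hj) + δ' i j)
          (min (lg PL θ (e[i]'hi) + δ' i (j + 1))
            (min (κu (e[i]'hi) + δ' i (j + 1)) (PM (f[j]'hj) + δ' (i + 1) j)))) :
    (∃ γ : List (Option E × Option F),
      IsAlignment (select e Uᶜ) f γ ∧
        totalCost PL PM Peq θ κu e Uᶜ γ ≤ 3 * (m₁ : ℝ≥0∞) + (m₂ : ℝ≥0∞) + c) ∧
    δ' e.length f.length ≤ 3 * (m₁ : ℝ≥0∞) + (m₂ : ℝ≥0∞) + c := by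
  have hlg : ∀ i : Fin e.length, lg PL θ (e.get i) ≤ 3 := fun i => by
    rw [lg_of_eq_one PL θ (hPL i)]
    calc 1 + θ (e.get i) ≤ 1 + 2 := add_le_add le_rfl (hθ i)
      _ = 3 := by norm_num
  have hcost : totalCost PL PM Peq θ κu e Uᶜ (logThenModelMoves (select e Uᶜ) f) ≤
      3 * (m₁ : ℝ≥0∞) + (m₂ : ℝ≥0∞) + c := by
    have hcard : Uᶜ.card = m₁ := by rw [Finset.card_compl, Fintype.card_fin, hm₁, hm₂]
    rw [totalCost_logThenModelMoves, compl_compl, hc, add_right_comm]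
    gcongr
    · simpa [hcard, mul_comm] using Finset.sum_le_card_nsmul Uᶜ _ 3 fun i _ => hlg i
    · simpa [hm₂] using Finset.sum_le_card_nsmul U _ 1 hU
  exact ⟨⟨_, isAlignment_logThenModelMoves _ f, hcost⟩,
    (dp_le_totalCost_logThenModelMoves PL PM Peq θ κu e f δ' h00 h0j
      (dp_succ_le_min_add PL PM Peq θ κu e f δ' hi0 hij le_rfl) Uᶜ).trans hcost⟩

end Stmt3
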